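/- arXiv:1902.02902 — 3 statements merged into one kernel-verified Lean document; each statement's English description precedes it below -/
import Mathlib

section
/- Let R be a commutative ring, let m ≥ 3, and let A be an (m−1)×m matrix over R. For any column indices 1 ≤ α < β < γ ≤ m and any row index δ ∈ [1, m−1], the following Desnanot–Jacobi-type identity holds: det A^{α̂} · det A^{β̂γ̂}_{δ̂} + det A^{γ̂} · det A^{α̂β̂}_{δ̂} = det A^{β̂} · det A^{α̂γ̂}_{δ̂}. -/
/-- The strictly monotone map `Fin m → Fin (m + 2)` whose image misses exactly the
two indices `β < γ`; it realizes the deletion of the two columns (or rows) `β` and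
`γ`, keeping the remaining ones in increasing order. -/
def skipTwo {m : ℕ} (β γ : Fin (m + 2)) (h : β < γ) : Fin m → Fin (m + 2) :=
  fun j =>
    γ.succAbove ((β.castLT (show (β : ℕ) < m + 1 by
      have h1 : (β : ℕ) < (γ : ℕ) := h
      have h2 := γ.isLt
      omega)).succAbove j)


open Matrix Finset

private lemma det_updateColumn_finset_sum {R : Type*} [CommRing R] {N K : Type*}
    [DecidableEq N] [Fintype N] (M : Matrix N N R) (j : N) (s : Finset K) (v : K → N → R) :
    (M.updateCol j (fun i => ∑ k ∈ s, v k i)).det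
      = ∑ k ∈ s, (M.updateCol j (v k)).det := by
  classical
  induction s using Finset.cons_induction with
  | empty =>
      simp only [Finset.sum_empty]
      exact Matrix.det_eq_zero_of_column_eq_zero j (fun i => by simp)
  | cons a s ha ih =>
      simp only [Finset.sum_cons]
      rw [show (fun i => v a i + ∑ k ∈ s, v k i) = v a + fun i => ∑ k ∈ s, v k i from rfl,
        Matrix.det_updateCol_add, ih]

private lemma syzygy_aux {R : Type*} [CommRing R] {m : ℕ}
    (A : Matrix (Fin (m + 1)) (Fin (m + 2)) R) (i : Fin (m + 1)) :
    ∑ k : Fin (m + 2), (-1 : R) ^ (k : ℕ) * A i k * (A.submatrix id k.succAbove).det = 0 := by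
  have h0 : (A.submatrix (Fin.cons i id) id).det = 0 := by
    refine Matrix.det_zero_of_row_eq (i := 0) (j := Fin.succ i) (Fin.succ_ne_zero i).symm ?_
    funext j
    simp [Matrix.submatrix_apply]
  rw [Matrix.det_succ_row_zero] at h0
  rw [← h0]
  refine Finset.sum_congr rfl fun k _ => ?_
  have h1 : A i k = (A.submatrix (Fin.cons i id) id) 0 k := by simp [Matrix.submatrix_apply]
  have h2 : A.submatrix id k.succAbove
      = (A.submatrix (Fin.cons i id) id).submatrix Fin.succ k.succAbove := by
    ext r s
    simp [Matrix.submatrix_apply]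
  rw [h1, h2]

private lemma aux_move {R : Type*} [CommRing R] {n : ℕ} {J : Type*}
    (B : Matrix (Fin (n + 1)) J R) (f g : Fin (n + 1) → J) (a b : Fin (n + 1)) (t : J)
    (h1 : g b = t) (h2 : ∀ s : Fin n, f (a.succAbove s) = g (b.succAbove s)) :
    ((B.submatrix id f).updateCol a (fun i => B i t)).det
      = (-1 : R) ^ ((a : ℕ) + (b : ℕ)) * (B.submatrix id g).det := by
  rw [Matrix.det_succ_column ((B.submatrix id f).updateCol a (fun i => B i t)) a,
    Matrix.det_succ_column (B.submatrix id g) b, Finset.mul_sum]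
  refine Finset.sum_congr rfl fun i _ => ?_
  have hm : ((B.submatrix id f).updateCol a (fun i => B i t)).submatrix i.succAbove a.succAbove
      = (B.submatrix id g).submatrix i.succAbove b.succAbove := by
    ext r s
    simp only [Matrix.submatrix_apply]
    rw [Matrix.updateCol_ne (Fin.succAbove_ne a s)]
    simp [Matrix.submatrix_apply, h2 s]
  have he : ((B.submatrix id f).updateCol a (fun i => B i t)) i a
      = (B.submatrix id g) i b := by
    simp [Matrix.updateCol_self, Matrix.submatrix_apply, h1]
  rw [hm, he]
  have hs : (-1 : R) ^ ((i : ℕ) + (a : ℕ))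
      = (-1 : R) ^ ((a : ℕ) + (b : ℕ)) * (-1 : R) ^ ((i : ℕ) + (b : ℕ)) := by
    have h4 : (-1 : R) ^ (2 * (b : ℕ)) = 1 := by
      rw [pow_mul]; norm_num
    rw [← pow_add]
    have h3 : (a : ℕ) + (b : ℕ) + ((i : ℕ) + (b : ℕ)) = (i : ℕ) + (a : ℕ) + 2 * (b : ℕ) := by ring
    rw [h3]
    conv_rhs => rw [pow_add]
    rw [h4, mul_one]
  rw [hs]
  ring

private lemma coe_succAbove' {n : ℕ} (p : Fin (n + 1)) (j : Fin n) :
    ((p.succAbove j : Fin (n + 1)) : ℕ) = if (j : ℕ) < (p : ℕ) then (j : ℕ) else (j : ℕ) + 1 := by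
  rw [Fin.succAbove]
  split_ifs with h1 h2 h3
  · simp
  · exact absurd h1 (by simpa [Fin.lt_def] using h2)
  · exact absurd (by simpa [Fin.lt_def] using h3) h1
  · simp

private lemma skipTwo_coe {m : ℕ} (β γ : Fin (m + 2)) (h : β < γ) (j : Fin m) :
    ((skipTwo β γ h j : Fin (m + 2)) : ℕ) =
      if (j : ℕ) < (β : ℕ) then (j : ℕ)
      else if (j : ℕ) + 2 ≤ (γ : ℕ) then (j : ℕ) + 1 else (j : ℕ) + 2 := by
  have hbg : (β : ℕ) < (γ : ℕ) := h
  unfold skipTwo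
  rw [coe_succAbove', coe_succAbove']
  simp only [Fin.coe_castLT]
  split_ifs <;> omega


set_option maxHeartbeats 1000000 in
/-- **Desnanot–Jacobi identity for a rectangular matrix.**
Let `A` be an `(m-1) × m` matrix over a commutative ring (here realized as an
`(m+1) × (m+2)` matrix, so that the paper's `m ≥ 3` is automatic whenever three
distinct columns exist).  For columns `α < β < γ` and any row `δ`,
`det A^{α̂} ⬝ det A^{β̂γ̂}_{δ̂} + det A^{γ̂} ⬝ det A^{α̂β̂}_{δ̂} = det A^{β̂} ⬝ det A^{α̂γ̂}_{δ̂}`,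
where hatted superscripts (resp. subscripts) denote deleted columns (resp. rows). -/
theorem desnanot_jacobi_rectangular {R : Type*} [CommRing R] {m : ℕ}
    (A : Matrix (Fin (m + 1)) (Fin (m + 2)) R)
    (α β γ : Fin (m + 2)) (hαβ : α < β) (hβγ : β < γ) (δ : Fin (m + 1)) :
    (A.submatrix id α.succAbove).det *
        (A.submatrix δ.succAbove (skipTwo β γ hβγ)).det +
      (A.submatrix id γ.succAbove).det *
        (A.submatrix δ.succAbove (skipTwo α β hαβ)).det =
    (A.submatrix id β.succAbove).det *
        (A.submatrix δ.succAbove (skipTwo α γ (hαβ.trans hβγ))).det := by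
  have hab : (α : ℕ) < (β : ℕ) := hαβ
  have hbc : (β : ℕ) < (γ : ℕ) := hβγ
  have hg := γ.isLt
  obtain ⟨n, rfl⟩ : ∃ n, m = n + 1 := ⟨m - 1, by omega⟩
  obtain ⟨B1, hB1⟩ : ∃ t, (β : ℕ) = t + 1 := ⟨(β : ℕ) - 1, by omega⟩
  obtain ⟨C1, hC1⟩ : ∃ t, (γ : ℕ) = t + 2 := ⟨(γ : ℕ) - 2, by omega⟩
  obtain ⟨B, hBdef⟩ : ∃ B : Matrix (Fin (n + 1)) (Fin (n + 3)) R,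
      B = A.submatrix δ.succAbove id := ⟨_, rfl⟩
  obtain ⟨Q, hQdef⟩ : ∃ Q : Matrix (Fin (n + 1)) (Fin (n + 1)) R,
      Q = B.submatrix id (skipTwo β γ hβγ) := ⟨_, rfl⟩
  obtain ⟨a, hav⟩ : ∃ a : Fin (n + 1), (a : ℕ) = (α : ℕ) := ⟨⟨(α : ℕ), by omega⟩, rfl⟩
  obtain ⟨b, hbv⟩ : ∃ b : Fin (n + 1), (b : ℕ) = B1 := ⟨⟨B1, by omega⟩, rfl⟩
  obtain ⟨c, hcv⟩ : ∃ c : Fin (n + 1), (c : ℕ) = C1 := ⟨⟨C1, by omega⟩, rfl⟩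
  -- the syzygy: alternating sum of maximal minors annihilates every row
  have hz : ∀ r : Fin (n + 1), ∑ k : Fin (n + 3),
      ((-1 : R) ^ (k : ℕ) * (A.submatrix id k.succAbove).det) * B r k = 0 := by
    intro r
    have h := syzygy_aux A (δ.succAbove r)
    rw [← h, hBdef]
    refine Finset.sum_congr rfl fun k _ => ?_
    simp only [Matrix.submatrix_apply, id_eq]
    ring
  -- sum over all columns vanishes
  have hsum : ∑ k : Fin (n + 3),
      ((-1 : R) ^ (k : ℕ) * (A.submatrix id k.succAbove).det) *
        (Q.updateCol a (fun i => B i k)).det = 0 := by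
    calc ∑ k : Fin (n + 3), ((-1 : R) ^ (k : ℕ) * (A.submatrix id k.succAbove).det) *
            (Q.updateCol a (fun i => B i k)).det
        = ∑ k : Fin (n + 3), (Q.updateCol a
            (fun i => ((-1 : R) ^ (k : ℕ) * (A.submatrix id k.succAbove).det) * B i k)).det := by
          refine Finset.sum_congr rfl fun k _ => ?_
          rw [show (fun i => ((-1 : R) ^ (k : ℕ) * (A.submatrix id k.succAbove).det) * B i k)
              = ((-1 : R) ^ (k : ℕ) * (A.submatrix id k.succAbove).det) • (fun i => B i k)
              from rfl, Matrix.det_updateCol_smul]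
      _ = (Q.updateCol a (fun i => ∑ k : Fin (n + 3),
            ((-1 : R) ^ (k : ℕ) * (A.submatrix id k.succAbove).det) * B i k)).det :=
          (det_updateColumn_finset_sum Q a Finset.univ _).symm
      _ = 0 := by
          rw [show (fun i => ∑ k : Fin (n + 3),
              ((-1 : R) ^ (k : ℕ) * (A.submatrix id k.succAbove).det) * B i k)
              = fun _ => (0 : R) from funext hz]
          exact Matrix.det_eq_zero_of_column_eq_zero a (fun i => by simp)
  -- all terms outside {α, β, γ} vanish
  have hoff : ∀ k ∈ (Finset.univ : Finset (Fin (n + 3))),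
      k ∉ ({α, β, γ} : Finset (Fin (n + 3))) →
      ((-1 : R) ^ (k : ℕ) * (A.submatrix id k.succAbove).det) *
        (Q.updateCol a (fun i => B i k)).det = 0 := by
    intro k _ hk
    simp only [Finset.mem_insert, Finset.mem_singleton, not_or] at hk
    obtain ⟨hk1, hk2, hk3⟩ := hk
    have hk1' : (k : ℕ) ≠ (α : ℕ) := fun h => hk1 (Fin.ext h)
    have hk2' : (k : ℕ) ≠ (β : ℕ) := fun h => hk2 (Fin.ext h)
    have hk3' : (k : ℕ) ≠ (γ : ℕ) := fun h => hk3 (Fin.ext h)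
    have hkk := k.isLt
    have hjlt : (if (k : ℕ) < (β : ℕ) then (k : ℕ)
        else if (k : ℕ) < (γ : ℕ) then (k : ℕ) - 1 else (k : ℕ) - 2) < n + 1 := by
      split_ifs <;> omega
    obtain ⟨j, hjv⟩ : ∃ j : Fin (n + 1), (j : ℕ) = (if (k : ℕ) < (β : ℕ) then (k : ℕ)
        else if (k : ℕ) < (γ : ℕ) then (k : ℕ) - 1 else (k : ℕ) - 2) :=
      ⟨⟨_, hjlt⟩, rfl⟩
    have hsj : skipTwo β γ hβγ j = k := by
      apply Fin.ext
      rw [skipTwo_coe, hjv]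
      split_ifs <;> omega
    have hja : j ≠ a := by
      intro h
      have hv := congrArg Fin.val h
      rw [hjv, hav] at hv
      split_ifs at hv <;> omega
    have hdet : (Q.updateCol a (fun i => B i k)).det = 0 := by
      refine Matrix.det_zero_of_column_eq (Ne.symm hja) (fun r => ?_)
      rw [Matrix.updateCol_self, Matrix.updateCol_ne hja]
      simp [hQdef, Matrix.submatrix_apply, hsj]
    rw [hdet, mul_zero]
  rw [← Finset.sum_subset (Finset.subset_univ ({α, β, γ} : Finset (Fin (n + 3)))) hoff] at hsum
  have hne1 : α ∉ ({β, γ} : Finset (Fin (n + 3))) := by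
    simp only [Finset.mem_insert, Finset.mem_singleton, not_or]
    exact ⟨hαβ.ne, (hαβ.trans hβγ).ne⟩
  have hne2 : β ∉ ({γ} : Finset (Fin (n + 3))) := by
    simp only [Finset.mem_singleton]
    exact hβγ.ne
  rw [Finset.sum_insert hne1, Finset.sum_insert hne2, Finset.sum_singleton] at hsum
  -- identify the three remaining terms
  have factα : skipTwo β γ hβγ a = α := by
    apply Fin.ext
    rw [skipTwo_coe, hav]
    split_ifs <;> omega
  have factβ : skipTwo α γ (hαβ.trans hβγ) b = β := by
    apply Fin.ext
    rw [skipTwo_coe, hbv]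
    split_ifs <;> omega
  have factγ : skipTwo α β hαβ c = γ := by
    apply Fin.ext
    rw [skipTwo_coe, hcv]
    split_ifs <;> omega
  have h2β : ∀ s : Fin n, skipTwo β γ hβγ (a.succAbove s)
      = skipTwo α γ (hαβ.trans hβγ) (b.succAbove s) := by
    intro s
    apply Fin.ext
    rw [skipTwo_coe, skipTwo_coe, coe_succAbove', coe_succAbove', hav, hbv]
    split_ifs <;> omega
  have h2γ : ∀ s : Fin n, skipTwo β γ hβγ (a.succAbove s)
      = skipTwo α β hαβ (c.succAbove s) := by
    intro s
    apply Fin.ext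
    rw [skipTwo_coe, skipTwo_coe, coe_succAbove', coe_succAbove', hav, hcv]
    split_ifs <;> omega
  have tα : (Q.updateCol a (fun i => B i α)).det
      = (-1 : R) ^ ((a : ℕ) + (a : ℕ)) * (B.submatrix id (skipTwo β γ hβγ)).det := by
    rw [hQdef]
    exact aux_move B (skipTwo β γ hβγ) (skipTwo β γ hβγ) a a α factα (fun _ => rfl)
  have tβ : (Q.updateCol a (fun i => B i β)).det
      = (-1 : R) ^ ((a : ℕ) + (b : ℕ)) * (B.submatrix id (skipTwo α γ (hαβ.trans hβγ))).det := by
    rw [hQdef]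
    exact aux_move B (skipTwo β γ hβγ) (skipTwo α γ (hαβ.trans hβγ)) a b β factβ h2β
  have tγ : (Q.updateCol a (fun i => B i γ)).det
      = (-1 : R) ^ ((a : ℕ) + (c : ℕ)) * (B.submatrix id (skipTwo α β hαβ)).det := by
    rw [hQdef]
    exact aux_move B (skipTwo β γ hβγ) (skipTwo α β hαβ) a c γ factγ h2γ
  rw [tα, tβ, tγ] at hsum
  have qeq1 : B.submatrix id (skipTwo β γ hβγ) = A.submatrix δ.succAbove (skipTwo β γ hβγ) := by
    rw [hBdef, Matrix.submatrix_submatrix, Function.comp_id, Function.id_comp]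
  have qeq2 : B.submatrix id (skipTwo α γ (hαβ.trans hβγ))
      = A.submatrix δ.succAbove (skipTwo α γ (hαβ.trans hβγ)) := by
    rw [hBdef, Matrix.submatrix_submatrix, Function.comp_id, Function.id_comp]
  have qeq3 : B.submatrix id (skipTwo α β hαβ) = A.submatrix δ.succAbove (skipTwo α β hαβ) := by
    rw [hBdef, Matrix.submatrix_submatrix, Function.comp_id, Function.id_comp]
  rw [qeq1, qeq2, qeq3, hav, hbv, hcv, hB1, hC1] at hsum
  have hs : (-1 : R) ^ (α : ℕ) * (-1 : R) ^ (α : ℕ) = 1 := by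
    rw [← pow_add]; exact Even.neg_one_pow ⟨(α : ℕ), rfl⟩
  have hu : (-1 : R) ^ B1 * (-1 : R) ^ B1 = 1 := by
    rw [← pow_add]; exact Even.neg_one_pow ⟨B1, rfl⟩
  have hv : (-1 : R) ^ C1 * (-1 : R) ^ C1 = 1 := by
    rw [← pow_add]; exact Even.neg_one_pow ⟨C1, rfl⟩
  set X1 := (A.submatrix id α.succAbove).det * (A.submatrix δ.succAbove (skipTwo β γ hβγ)).det
    with hX1
  set X2 := (A.submatrix id β.succAbove).det *
    (A.submatrix δ.succAbove (skipTwo α γ (hαβ.trans hβγ))).det with hX2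
  set X3 := (A.submatrix id γ.succAbove).det * (A.submatrix δ.succAbove (skipTwo α β hαβ)).det
    with hX3
  linear_combination ((-1 : R) ^ (α : ℕ)) * hsum
    + (-(X1 * ((-1 : R) ^ (α : ℕ) * (-1 : R) ^ (α : ℕ) + 1))
        + X2 * ((-1 : R) ^ B1 * (-1 : R) ^ B1) - X3 * ((-1 : R) ^ C1 * (-1 : R) ^ C1)) * hs
    + X2 * hu - X3 * hv
end

section
/- Let V be a finite-dimensional vector space over a field F in which 2 is invertible, equipped with a nondegenerate symmetric bilinear form ⟨·,·⟩. Let γ and γ* be nilpotent linear endomorphisms of V that are adjoint to each other, i.e. ⟨γx, y⟩ = ⟨x, γ*y⟩ for all x, y ∈ V. Then id − γ and id − γ* are invertible, and the operator S := (1/2)((id − γ)^{−1} − (id − γ*)^{−1}) satisfies: (a) S is skew-symmetric with respect to the form, i.e. ⟨Sx, y⟩ = −⟨x, Sy⟩ for all x, y ∈ V; and (b) S((id − γ)h) = (1/2)(id + γ)h for every h ∈ V with γ*(γh) = h. -/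
/-- The operator `S = (1/2)((1 - γ)⁻¹ - (1 - γ*)⁻¹)`, written with `Ring.inverse`
(which agrees with the genuine inverse whenever `1 - γ` and `1 - γ*` are units,
as is asserted in the theorem below). -/
noncomputable def Sop {F V : Type*} [Field F] [AddCommGroup V] [Module F V]
    (γ γs : Module.End F V) : Module.End F V :=
  (2 : F)⁻¹ • (Ring.inverse (1 - γ) - Ring.inverse (1 - γs))

/-- **Diagonal component of a Belavin–Drinfeld R-matrix (abstract form).**
Let `V` be a finite-dimensional vector space over a field `F` with `2 ≠ 0`, equipped
with a nondegenerate symmetric bilinear form `B`.  Let `γ`, `γ*` be nilpotent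
endomorphisms of `V` adjoint to each other.  Then `1 - γ` and `1 - γ*` are invertible,
and `S = (1/2)((1 - γ)⁻¹ - (1 - γ*)⁻¹)` is skew-symmetric with respect to `B` and
satisfies `S((1 - γ)h) = (1/2)(1 + γ)h` for every `h` with `γ*(γ h) = h`. -/
theorem bd_diagonal_operator {F V : Type*} [Field F] [AddCommGroup V] [Module F V]
    [FiniteDimensional F V] (h2 : (2 : F) ≠ 0)
    (B : LinearMap.BilinForm F V)
    (hsymm : ∀ x y : V, B x y = B y x)
    (hnd : LinearMap.BilinForm.Nondegenerate B)
    (γ γs : Module.End F V)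
    (hγ : IsNilpotent γ) (hγs : IsNilpotent γs)
    (hadj : ∀ x y : V, B (γ x) y = B x (γs y)) :
    IsUnit ((1 : Module.End F V) - γ) ∧ IsUnit ((1 : Module.End F V) - γs) ∧
    (∀ x y : V, B (Sop γ γs x) y = - B x (Sop γ γs y)) ∧
    (∀ h : V, γs (γ h) = h → Sop γ γs ((1 - γ) h) = (2 : F)⁻¹ • ((1 + γ) h)) := by
  have hu : IsUnit ((1 : Module.End F V) - γ) := hγ.isUnit_one_sub
  have hus : IsUnit ((1 : Module.End F V) - γs) := hγs.isUnit_one_sub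
  set A := Ring.inverse ((1 : Module.End F V) - γ) with hA
  set As := Ring.inverse ((1 : Module.End F V) - γs) with hAs
  -- basic cancellation facts, as statements about application to vectors
  have hcA : ∀ v : V, (1 - γ) (A v) = v := fun v => by
    have := Ring.mul_inverse_cancel _ hu
    calc (1 - γ) (A v) = (((1 : Module.End F V) - γ) * A) v := rfl
      _ = v := by rw [this]; rfl
  have hcA' : ∀ v : V, A ((1 - γ) v) = v := fun v => by
    have := Ring.inverse_mul_cancel _ hu
    calc A ((1 - γ) v) = (A * ((1 : Module.End F V) - γ)) v := rfl
      _ = v := by rw [this]; rfl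
  have hcAs : ∀ v : V, (1 - γs) (As v) = v := fun v => by
    have := Ring.mul_inverse_cancel _ hus
    calc (1 - γs) (As v) = (((1 : Module.End F V) - γs) * As) v := rfl
      _ = v := by rw [this]; rfl
  -- adjointness of 1 - γ and 1 - γs
  have hadj1 : ∀ x y : V, B ((1 - γ) x) y = B x ((1 - γs) y) := by
    intro x y
    simp only [LinearMap.sub_apply, Module.End.one_apply, map_sub, LinearMap.sub_apply]
    rw [hadj]
  -- adjointness of the inverses
  have hadjA : ∀ x y : V, B (A x) y = B x (As y) := by
    intro x y
    conv_lhs => rw [← hcAs y]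
    rw [← hadj1, hcA]
  have hadjAs : ∀ x y : V, B (As x) y = B x (A y) := by
    intro x y
    rw [hsymm (As x) y, ← hadjA, hsymm]
  refine ⟨hu, hus, ?_, ?_⟩
  · intro x y
    simp only [Sop, ← hA, ← hAs, LinearMap.smul_apply, LinearMap.sub_apply,
      map_smul, map_sub, LinearMap.map_smul₂, LinearMap.map_sub₂, smul_eq_mul]
    rw [hadjA, hadjAs]
    ring
  · intro h hh
    have key : As ((1 - γ) h) = -(γ h) := by
      have : ((1 : Module.End F V) - γ) h = (1 - γs) (-(γ h)) := by
        simp only [LinearMap.sub_apply, Module.End.one_apply, map_neg, hh]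
        abel
      rw [this]
      have hinj : Function.Injective fun v : V => (1 - γs) v := by
        intro a b hab
        have : As ((1 - γs) a) = As ((1 - γs) b) := by simp [hab]
        have hcAs' : ∀ v : V, As ((1 - γs) v) = v := fun v => by
          have := Ring.inverse_mul_cancel _ hus
          calc As ((1 - γs) v) = (As * ((1 : Module.End F V) - γs)) v := rfl
            _ = v := by rw [this]; rfl
        rwa [hcAs', hcAs'] at this
      exact hinj (by simpa using hcAs (((1 : Module.End F V) - γs) (-(γ h))))
    show ((2 : F)⁻¹ • (A - As)) ((1 - γ) h) = _
    rw [LinearMap.smul_apply, LinearMap.sub_apply, hcA', key]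
    simp only [LinearMap.add_apply, Module.End.one_apply]
    congr 1
    abel
end

section
/- Let R be a commutative ring, let l ≥ 1 and m ≥ l + 2 be integers, and let A be an m×(m+1) matrix over R such that A_{ij} = 0 for all i ∈ [l+2, m] and j ∈ [1, l+1]. Let Ā = A_{[1,l+1]}^{[1,l+1]} be the leading (l+1)×(l+1) submatrix. Then det A^{1̂} · det Ā_{1̂}^{2̂} + det Ā · det A_{1̂}^{1̂2̂} = det A^{2̂} · det Ā_{1̂}^{1̂}. -/
/-!
Let `w` be the first column of the adjugate of `Ā` (the cofactors of its first row),
extended by zero to all `m + 1` columns. By Cramer's rule and the zero block,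
`A w = det Ā • e₁`. Put `A w` in place of the first column of `A^{1̂}`: expanding
along that column gives `det Ā · det A_{1̂}^{1̂2̂}`, while multilinearity gives
`w₁ det A^{2̂} + w₂ det A^{1̂}`, all other columns of `A` being already present.
Since `w₁ = det Ā_{1̂}^{1̂}` and `w₂ = -det Ā_{1̂}^{2̂}`, this is the identity.
No determinant has to be cancelled, so the argument works over any commutative ring.
-/

/-- The map `Fin n → Fin m` enumerating, in increasing order, the `n` consecutive
indices starting at `a` (0-based). -/
def offEmb (a n m : ℕ) (h : a + n ≤ m) : Fin n → Fin m :=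
  fun i => ⟨a + i.val, by have := i.isLt; omega⟩

open Matrix Function

section

variable {R : Type*} [CommRing R]

theorem cramer_single_zero_apply {n : ℕ} (M : Matrix (Fin (n + 1)) (Fin (n + 1)) R)
    (j : Fin (n + 1)) :
    cramer M (Pi.single 0 1) j = (-1) ^ (j : ℕ) * (M.submatrix Fin.succ j.succAbove).det := by
  rw [cramer_eq_adjugate_mulVec, mulVec_single_one, col_apply,
    adjugate_fin_succ_eq_det_submatrix, Fin.val_zero, zero_add, Fin.succAbove_zero]

theorem det_updateCol_zero_smul_single {n : ℕ} (M : Matrix (Fin (n + 1)) (Fin (n + 1)) R)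
    (c : R) :
    (M.updateCol 0 (c • Pi.single 0 1)).det = c * (M.submatrix Fin.succ Fin.succ).det := by
  rw [det_updateCol_smul, ← cramer_apply, cramer_single_zero_apply, Fin.val_zero, pow_zero,
    one_mul, Fin.succAbove_zero]

theorem det_updateCol_zero_mulVec {k : ℕ} (A : Matrix (Fin (k + 1)) (Fin (k + 2)) R)
    (w : Fin (k + 2) → R) :
    ((A.submatrix id Fin.succ).updateCol 0 (A *ᵥ w)).det =
      w 0 * (A.submatrix id (Fin.succAbove 1)).det + w 1 * (A.submatrix id Fin.succ).det := by
  set P := A.submatrix id Fin.succ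
  have hcol : A *ᵥ w = w 0 • (fun i => A i 0) + fun i => ∑ j, w j.succ • P i j := by
    ext i
    simp [P, mulVec, dotProduct, Fin.sum_univ_succ, mul_comm]
  have hupd : P.updateCol 0 (fun i => A i 0) = A.submatrix id (Fin.succAbove 1) := by
    ext i j
    cases j using Fin.cases <;> simp [P]
  rw [hcol, det_updateCol_add, det_updateCol_smul, hupd, det_updateCol_sum]
  simp

theorem mulVec_extend_zero_apply {m n p : Type*} [Fintype n] [Fintype p] (A : Matrix m n R)
    {e : p → n} (he : Injective e) (v : p → R) (i : m) :
    (A *ᵥ extend e v 0) i = ∑ q, A i (e q) * v q := by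
  refine (Fintype.sum_of_injective e he _ _ (fun j hj => ?_) fun q => ?_).symm
  · rw [extend_apply' _ _ _ hj, Pi.zero_apply, mul_zero]
  · rw [he.extend_apply]

theorem det_submatrix_congr_val {m n p : ℕ} (A : Matrix (Fin m) (Fin n) R)
    {r r' : Fin p → Fin m} {c c' : Fin p → Fin n} (hr : ∀ i, (r i : ℕ) = r' i)
    (hc : ∀ j, (c j : ℕ) = c' j) :
    (A.submatrix r c).det = (A.submatrix r' c').det := by
  rw [funext fun i => Fin.ext (hr i), funext fun j => Fin.ext (hc j)]

theorem mulVec_extend_cramer_of_zero_block {m n p : ℕ} (hpm : p ≤ m) (hpn : p ≤ n)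
    (A : Matrix (Fin m) (Fin n) R)
    (hz : ∀ (i : Fin m) (j : Fin n), p ≤ (i : ℕ) → (j : ℕ) < p → A i j = 0)
    (i₀ : Fin p) :
    A *ᵥ extend (offEmb 0 p n (by omega))
        (cramer (A.submatrix (offEmb 0 p m (by omega)) (offEmb 0 p n (by omega)))
          (Pi.single i₀ 1)) 0 =
      (A.submatrix (offEmb 0 p m (by omega)) (offEmb 0 p n (by omega))).det •
        Pi.single (offEmb 0 p m (by omega) i₀) 1 := by
  set r := offEmb 0 p m (by omega)
  set c := offEmb 0 p n (by omega)
  have hr : Injective r := fun i j h => Fin.ext (by simpa [r, offEmb] using h)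
  have hc : Injective c := fun i j h => Fin.ext (by simpa [c, offEmb] using h)
  ext i
  rw [mulVec_extend_zero_apply A hc]
  by_cases hi : (i : ℕ) < p
  · obtain ⟨i, rfl⟩ : ∃ i', r i' = i := ⟨⟨i, hi⟩, Fin.ext (by simp [r, offEmb])⟩
    calc ∑ q, A (r i) (c q) * cramer (A.submatrix r c) (Pi.single i₀ 1) q
        = (A.submatrix r c *ᵥ cramer (A.submatrix r c) (Pi.single i₀ 1)) i := rfl
      _ = ((A.submatrix r c).det • Pi.single i₀ 1) i := by rw [mulVec_cramer]
      _ = _ := by simp only [Pi.smul_apply, Pi.single_apply, hr.eq_iff]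
  · have hi₀ : i ≠ r i₀ := fun h => hi (by simp [h, r, offEmb])
    rw [Pi.smul_apply, Pi.single_eq_of_ne hi₀, smul_zero]
    exact Finset.sum_eq_zero fun q _ => by
      rw [hz i (c q) (by omega) (by simp [c, offEmb]), zero_mul]

end

/-- **Identity (5.2) of the paper.**
Let `A` be an `m × (m+1)` matrix over a commutative ring with `m ≥ l + 2`, `l ≥ 1`,
such that `A_{ij} = 0` for `i ∈ [l+2, m]`, `j ∈ [1, l+1]` (1-based), and let
`Ā = A_{[1,l+1]}^{[1,l+1]}` be the leading `(l+1) × (l+1)` submatrix.  Then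
`det A^{1̂} · det Ā_{1̂}^{2̂} + det Ā · det A_{1̂}^{1̂2̂} = det A^{2̂} · det Ā_{1̂}^{1̂}`,
where hatted superscripts (resp. subscripts) indicate deleted columns (resp. rows). -/
theorem exchange_identity {R : Type*} [CommRing R] (l m : ℕ) (hl : 1 ≤ l) (hm : l + 2 ≤ m)
    (A : Matrix (Fin m) (Fin (m + 1)) R)
    (hz : ∀ (i : Fin m) (j : Fin (m + 1)), l + 1 ≤ (i : ℕ) → (j : ℕ) ≤ l → A i j = 0) :
    (A.submatrix id (Fin.succAbove (⟨0, by omega⟩ : Fin (m + 1)))).det *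
        (A.submatrix (offEmb 1 l m (by omega))
          (fun t : Fin l => offEmb 0 (l + 1) (m + 1) (by omega)
            (Fin.succAbove (⟨1, by omega⟩ : Fin (l + 1)) t))).det +
      (A.submatrix (offEmb 0 (l + 1) m (by omega)) (offEmb 0 (l + 1) (m + 1) (by omega))).det *
        (A.submatrix (offEmb 1 (m - 1) m (by omega)) (offEmb 2 (m - 1) (m + 1) (by omega))).det =
      (A.submatrix id (Fin.succAbove (⟨1, by omega⟩ : Fin (m + 1)))).det *
        (A.submatrix (offEmb 1 l m (by omega)) (offEmb 1 l (m + 1) (by omega))).det := by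
  obtain ⟨k, rfl⟩ : ∃ k, m = k + 1 := ⟨m - 1, by omega⟩
  have hAw := mulVec_extend_cramer_of_zero_block (by omega) (by omega) A
    (fun i j hi hj => hz i j hi (Nat.lt_succ_iff.mp hj)) 0
  set r := offEmb 0 (l + 1) (k + 1) (by omega)
  set c := offEmb 0 (l + 1) (k + 1 + 1) (by omega)
  set v := cramer (A.submatrix r c) (Pi.single 0 1) with hv
  have hc : Injective c := fun p q h => Fin.ext (by simpa [c, offEmb] using h)
  have hv0 : extend c v 0 0 =
      (A.submatrix (offEmb 1 l (k + 1) (by omega)) (offEmb 1 l (k + 1 + 1) (by omega))).det := by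
    rw [show (0 : Fin (k + 1 + 1)) = c 0 from rfl, hc.extend_apply, hv,
      cramer_single_zero_apply, Fin.val_zero, pow_zero, one_mul, Fin.succAbove_zero,
      submatrix_submatrix]
    exact det_submatrix_congr_val A (fun i => by simp [r, offEmb]; omega)
      fun j => by simp [c, offEmb]; omega
  have hv1 : extend c v 0 1 = -(A.submatrix (offEmb 1 l (k + 1) (by omega))
      (fun t : Fin l => c (Fin.succAbove ⟨1, by omega⟩ t))).det := by
    rw [show (1 : Fin (k + 1 + 1)) = c ⟨1, by omega⟩ from rfl, hc.extend_apply, hv,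
      cramer_single_zero_apply, pow_one, neg_one_mul, submatrix_submatrix]
    exact congrArg _ (det_submatrix_congr_val A (fun i => by simp [r, offEmb]; omega) fun j => rfl)
  have hminor : ((A.submatrix id Fin.succ).submatrix Fin.succ Fin.succ).det =
      (A.submatrix (offEmb 1 (k + 1 - 1) (k + 1) (by omega))
        (offEmb 2 (k + 1 - 1) (k + 1 + 1) (by omega))).det := by
    rw [submatrix_submatrix]
    exact det_submatrix_congr_val A (fun i => by simp [offEmb]; omega)
      fun j => by simp [offEmb]; omega
  have hexpand := det_updateCol_zero_mulVec A (extend c v 0)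
  rw [hAw, show r 0 = 0 from rfl, det_updateCol_zero_smul_single, hv0, hv1, hminor] at hexpand
  rw [Fin.mk_one, show (⟨0, _⟩ : Fin (k + 2)) = 0 from rfl, Fin.succAbove_zero]
  linear_combination hexpand
end
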